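/- Let ℓ, c, d ∈ ℕ, let G and H be finite directed labelled graphs of dimension d, and let u be a node of G and v a node of H. Then u and v satisfy the same C²_{ℓ,c} formulas with one free variable (i.e., for every C²_{ℓ,c} formula φ(x), G ⊨ φ(u) if and only if H ⊨ φ(v)) if and only if W^ℓ_c(u) computed in G equals W^ℓ_c(v) computed in H. -/

import Mathlib

/-!
Soundness is an induction on formulas for pairs of assignments that agree on `WL` colours and on
the atomic type of the two variables. At a counting quantifier `∃_k w` with `k ≤ c`, whether a
witness works depends only on its colour one round lower and on its adjacency kind relative to
the other variable; equality of the colours one round higher says exactly that each such class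
has the same size up to the threshold `c`.

Completeness uses characteristic formulas: for every node `u` of `G` there is a `C²_{ℓ,c}` formula
that holds at a node of an arbitrary graph iff that node has colour `W^ℓ_c(u)`.
-/

/-- The two variables of the logic `C²`. -/
inductive C2Var : Type
  | x : C2Var
  | y : C2Var
deriving DecidableEq

/-- Formulas of `C²`, the two-variable fragment of first-order logic with counting, over
the signature with one binary relation symbol `E` and unary predicates `P₁,…,P_d`.
`exN k v φ` is the counting quantifier `∃_k v. φ` ("at least `k` elements"). -/
inductive C2 (d : ℕ) : Type
  | eq : C2Var → C2Var → C2 d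
  | edge : C2Var → C2Var → C2 d
  | pred : Fin d → C2Var → C2 d
  | not : C2 d → C2 d
  | and : C2 d → C2 d → C2 d
  | or : C2 d → C2 d → C2 d
  | exN : ℕ → C2Var → C2 d → C2 d

/-- Satisfaction of a `C²` formula in a finite directed labelled graph `(V, E, lab)`
under an assignment `a` of the two variables. -/
def C2.sat {d : ℕ} {V : Type} [Fintype V] (E : V → V → Prop) (lab : V → Fin d → Bool) :
    C2 d → (C2Var → V) → Prop
  | .eq s t, a => a s = a t
  | .edge s t, a => E (a s) (a t)
  | .pred i s, a => lab (a s) i = true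
  | .not φ, a => ¬ C2.sat E lab φ a
  | .and φ ψ, a => C2.sat E lab φ a ∧ C2.sat E lab ψ a
  | .or φ ψ, a => C2.sat E lab φ a ∨ C2.sat E lab ψ a
  | .exN k w φ, a => k ≤ Nat.card {u : V | C2.sat E lab φ (Function.update a w u)}

/-- Quantifier nesting depth of a `C²` formula. -/
def C2.depth {d : ℕ} : C2 d → ℕ
  | .eq _ _ => 0
  | .edge _ _ => 0
  | .pred _ _ => 0
  | .not φ => φ.depth
  | .and φ ψ => max φ.depth ψ.depth
  | .or φ ψ => max φ.depth ψ.depth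
  | .exN _ _ φ => φ.depth + 1

/-- Counting rank of a `C²` formula: the maximal `k` occurring in a counting
quantifier `∃_k`. -/
def C2.rank {d : ℕ} : C2 d → ℕ
  | .eq _ _ => 0
  | .edge _ _ => 0
  | .pred _ _ => 0
  | .not φ => φ.rank
  | .and φ ψ => max φ.rank ψ.rank
  | .or φ ψ => max φ.rank ψ.rank
  | .exN k _ φ => max k φ.rank

/-- Free variables of a `C²` formula. -/
def C2.freeVars {d : ℕ} : C2 d → Finset C2Var
  | .eq s t => {s, t}
  | .edge s t => {s, t}
  | .pred _ s => {s}
  | .not φ => φ.freeVars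
  | .and φ ψ => φ.freeVars ∪ ψ.freeVars
  | .or φ ψ => φ.freeVars ∪ ψ.freeVars
  | .exN _ w φ => φ.freeVars.erase w

/-- The multiset `⟦f w : w ∈ V, p w⟧` of values of `f` on the elements satisfying `p`. -/
noncomputable def msetOf {V α : Type} [Fintype V] (p : V → Prop) (f : V → α) : Multiset α :=
  letI := Classical.decPred p
  ((Finset.univ.filter p).val.map f)

/-- Truncate every multiplicity in a multiset to at most `c` (the `c`-bounded multiset). -/
noncomputable def trunc {α : Type} (c : ℕ) (M : Multiset α) : Multiset α :=
  letI := Classical.decEq α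
  M.toFinset.val.bind fun a => Multiset.replicate (min c (M.count a)) a

/-- The type of colours of the (bounded) Weisfeiler–Leman algorithm after `ℓ` rounds, for
graphs of dimension `d`: a colour of round `ℓ+1` is a tuple of a colour of round `ℓ`
and four multisets of colours of round `ℓ`. -/
def WLC (d : ℕ) : ℕ → Type
  | 0 => Fin d → Bool
  | (ℓ+1) => WLC d ℓ × Multiset (WLC d ℓ) × Multiset (WLC d ℓ) × Multiset (WLC d ℓ) ×
      Multiset (WLC d ℓ)

/-- The `c`-bounded Weisfeiler–Leman colouring `W^ℓ_c` on the directed labelled graph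
`(V, E, lab)`:  `W^0_c(v) = lab v` and `W^{ℓ+1}_c(v)` is the tuple of `W^ℓ_c(v)` and the
`c`-bounded multisets of the previous colours over `←N(v)∩→N(v)`, `←N(v)∖→N(v)`,
`→N(v)∖←N(v)` and `V∖(N(v)∪{v})`. -/
noncomputable def WL {d : ℕ} {V : Type} [Fintype V] (E : V → V → Prop)
    (lab : V → Fin d → Bool) (c : ℕ) : (ℓ : ℕ) → V → WLC d ℓ
  | 0, v => lab v
  | (ℓ+1), v =>
      (WL E lab c ℓ v,
       trunc c (msetOf (fun w => E w v ∧ E v w) (WL E lab c ℓ)),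
       trunc c (msetOf (fun w => E w v ∧ ¬ E v w) (WL E lab c ℓ)),
       trunc c (msetOf (fun w => E v w ∧ ¬ E w v) (WL E lab c ℓ)),
       trunc c (msetOf (fun w => ¬ (E w v ∨ E v w) ∧ w ≠ v) (WL E lab c ℓ)))

section Counting

open Finset

variable {V W γ : Type}

lemma card_setOf_and_eq_self_eq {P : V → Prop} {Q : W → Prop} {p : V} {q : W}
    (h : P p ↔ Q q) : Nat.card {x | P x ∧ x = p} = Nat.card {y | Q y ∧ y = q} := by
  by_cases hp : P p
  · have eG : {x | P x ∧ x = p} = {p} := Set.ext fun x => ⟨And.right, fun hx => ⟨hx ▸ hp, hx⟩⟩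
    have eH : {y | Q y ∧ y = q} = {q} :=
      Set.ext fun y => ⟨And.right, fun hy => ⟨hy ▸ h.1 hp, hy⟩⟩
    simp [eG, eH]
  · have eG : {x | P x ∧ x = p} = ∅ :=
      Set.eq_empty_of_forall_notMem fun x hx => hp (hx.2 ▸ hx.1)
    have eH : {y | Q y ∧ y = q} = ∅ :=
      Set.eq_empty_of_forall_notMem fun y hy => hp (h.2 (hy.2 ▸ hy.1))
    simp [eG, eH]

variable [Fintype V] [Fintype W]

lemma natCard_setOf_eq_card_filter (P : V → Prop) [DecidablePred P] :
    Nat.card {x | P x} = #(univ.filter P) := by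
  rw [Nat.card_eq_card_toFinset, Set.toFinset_ofPred]

lemma count_trunc [DecidableEq γ] (c : ℕ) (M : Multiset γ) (g : γ) :
    (trunc c M).count g = min c (M.count g) := by
  unfold trunc
  rw [Subsingleton.elim (Classical.decEq γ) ‹_›, Multiset.count_bind]
  simp only [Multiset.count_replicate]
  rw [← Finset.sum_eq_multiset_sum, Finset.sum_ite_eq']
  split_ifs with hg
  · rfl
  · rw [Multiset.count_eq_zero_of_notMem (by simpa using hg), _root_.min_zero]

lemma trunc_eq_trunc_iff [DecidableEq γ] {c : ℕ} {M N : Multiset γ} :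
    trunc c M = trunc c N ↔ ∀ g, min c (M.count g) = min c (N.count g) := by
  simp only [Multiset.ext, count_trunc]

lemma count_msetOf [DecidableEq γ] (p : V → Prop) (f : V → γ) (g : γ) :
    (msetOf p f).count g = Nat.card {x | p x ∧ f x = g} := by
  classical
  simp [msetOf, Multiset.count_map, ← Finset.filter_val, Finset.filter_filter, eq_comm]

lemma trunc_msetOf_eq_trunc_msetOf_iff {c : ℕ} {pH : W → Prop} {fH : W → γ} {pG : V → Prop}
    {fG : V → γ} :
    trunc c (msetOf pH fH) = trunc c (msetOf pG fG) ↔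
      min c (Nat.card {y | pH y ∧ ∀ x, ¬ fH y = fG x}) = 0 ∧
        ∀ x, min c (Nat.card {y | pH y ∧ fH y = fG x}) =
          min c (Nat.card {x' | pG x' ∧ fG x' = fG x}) := by
  classical
  simp only [trunc_eq_trunc_iff, count_msetOf]
  constructor
  · intro h
    refine ⟨?_, fun x => h (fG x)⟩
    rcases Nat.eq_zero_or_pos c with rfl | hc
    · exact Nat.zero_min _
    suffices {y | pH y ∧ ∀ x, ¬ fH y = fG x} = ∅ by
      rw [this, Nat.card_of_isEmpty, _root_.min_zero]
    refine Set.eq_empty_of_forall_notMem fun y ⟨hy, hne⟩ => ?_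
    have hH : 0 < Nat.card {y' | pH y' ∧ fH y' = fH y} :=
      Nat.card_pos_iff.2 ⟨⟨⟨y, hy, rfl⟩⟩, inferInstance⟩
    have hG : 0 < Nat.card {x | pG x ∧ fG x = fH y} := by
      have := h (fH y)
      omega
    obtain ⟨⟨⟨x, -, hx⟩⟩, -⟩ := Nat.card_pos_iff.1 hG
    exact hne x hx.symm
  · rintro ⟨hnew, hold⟩ g
    by_cases hg : ∃ x, fG x = g
    · obtain ⟨x, rfl⟩ := hg
      exact hold x
    · have hG : {x | pG x ∧ fG x = g} = ∅ :=
        Set.eq_empty_of_forall_notMem fun x hx => hg ⟨x, hx.2⟩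
      have hle : Nat.card {y | pH y ∧ fH y = g} ≤ Nat.card {y | pH y ∧ ∀ x, ¬ fH y = fG x} :=
        Nat.card_mono (Set.toFinite _) fun y hy => ⟨hy.1, fun x hx => hg ⟨x, hx ▸ hy.2⟩⟩
      simp only [hG, Nat.card_of_isEmpty, _root_.min_zero]
      omega

lemma min_sum_eq_min_sum_min {ι : Type} (c : ℕ) (s : Finset ι) (f : ι → ℕ) :
    min c (∑ i ∈ s, f i) = min c (∑ i ∈ s, min c (f i)) := by
  induction s using Finset.cons_induction with
  | empty => rfl
  | cons a s ha ih => rw [sum_cons, sum_cons]; omega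

lemma min_card_and_eq_of_min_card_eq {c : ℕ} {A SG : V → Prop} {B SH : W → Prop}
    (hAB : min c (Nat.card {x | A x}) = min c (Nat.card {y | B y}))
    (hS : ∀ x y, A x → B y → (SG x ↔ SH y)) :
    min c (Nat.card {x | A x ∧ SG x}) = min c (Nat.card {y | B y ∧ SH y}) := by
  have leA : Nat.card {x | A x ∧ SG x} ≤ Nat.card {x | A x} :=
    Nat.card_mono (Set.toFinite _) fun x hx => hx.1
  have leB : Nat.card {y | B y ∧ SH y} ≤ Nat.card {y | B y} :=
    Nat.card_mono (Set.toFinite _) fun y hy => hy.1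
  by_cases hne : ∃ x y, A x ∧ B y
  · obtain ⟨x₀, y₀, hx₀, hy₀⟩ := hne
    by_cases h₀ : SG x₀
    · have eA : {x | A x ∧ SG x} = {x | A x} := Set.ext fun x =>
        ⟨And.left, fun hx => ⟨hx, (hS x y₀ hx hy₀).2 ((hS x₀ y₀ hx₀ hy₀).1 h₀)⟩⟩
      have eB : {y | B y ∧ SH y} = {y | B y} := Set.ext fun y =>
        ⟨And.left, fun hy => ⟨hy, (hS x₀ y hx₀ hy).1 h₀⟩⟩
      rw [eA, eB, hAB]
    · have eA : {x | A x ∧ SG x} = ∅ := Set.eq_empty_of_forall_notMem fun x hx =>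
        h₀ ((hS x₀ y₀ hx₀ hy₀).2 ((hS x y₀ hx.1 hy₀).1 hx.2))
      have eB : {y | B y ∧ SH y} = ∅ := Set.eq_empty_of_forall_notMem fun y hy =>
        h₀ ((hS x₀ y hx₀ hy.1).2 hy.2)
      simp [eA, eB]
  · have hA : min c (Nat.card {x | A x}) = 0 := by
      by_cases hA : ∃ x, A x
      · obtain ⟨x, hx⟩ := hA
        have : {y | B y} = ∅ := Set.eq_empty_of_forall_notMem fun y hy => hne ⟨x, y, hx, hy⟩
        rw [hAB, this, Nat.card_of_isEmpty, _root_.min_zero]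
      · rw [show {x | A x} = (∅ : Set V) from Set.eq_empty_of_forall_notMem fun x hx => hA ⟨x, hx⟩,
          Nat.card_of_isEmpty, _root_.min_zero]
    omega

lemma min_card_eq_of_min_card_fibres_eq {K : Type} {c : ℕ} (κG : V → K) (κH : W → K)
    (hκ : ∀ k, min c (Nat.card {x | κG x = k}) = min c (Nat.card {y | κH y = k}))
    {SG : V → Prop} {SH : W → Prop} (hS : ∀ x y, κG x = κH y → (SG x ↔ SH y)) :
    min c (Nat.card {x | SG x}) = min c (Nat.card {y | SH y}) := by
  classical
  set T := univ.image κG ∪ univ.image κH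
  have card_eq_sum {U : Type} [Fintype U] (κ : U → K) (hκT : ∀ x, κ x ∈ T) (S : U → Prop) :
      Nat.card {x | S x} = ∑ k ∈ T, Nat.card {x | κ x = k ∧ S x} := by
    simp only [natCard_setOf_eq_card_filter]
    rw [card_eq_sum_card_fiberwise fun x _ => hκT x]
    simp only [filter_filter, and_comm]
  rw [card_eq_sum κG (by simp [T]) SG, card_eq_sum κH (by simp [T]) SH,
    min_sum_eq_min_sum_min c T (fun k => Nat.card {x | κG x = k ∧ SG x}),
    min_sum_eq_min_sum_min c T (fun k => Nat.card {y | κH y = k ∧ SH y})]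
  exact congrArg (min c) (sum_congr rfl fun k _ =>
    min_card_and_eq_of_min_card_eq (hκ k) fun x y hx hy => hS x y (hx.trans hy.symm))

end Counting

/-- The classes `←N(v)∩→N(v)`, `←N(v)∖→N(v)`, `→N(v)∖←N(v)` and `V∖(N(v)∪{v})` of the `WL`
refinement step. -/
inductive AdjKind
  | both
  | inOnly
  | outOnly
  | neither
  deriving DecidableEq

instance : Fintype AdjKind :=
  ⟨{.both, .inOnly, .outOnly, .neither}, fun k => by cases k <;> simp⟩

namespace AdjKind

def holds {V : Type} : AdjKind → (V → V → Prop) → V → V → Prop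
  | both, E, v, w => E w v ∧ E v w
  | inOnly, E, v, w => E w v ∧ ¬ E v w
  | outOnly, E, v, w => E v w ∧ ¬ E w v
  | neither, E, v, w => ¬ (E w v ∨ E v w) ∧ w ≠ v

def formula {d : ℕ} : AdjKind → C2Var → C2Var → C2 d
  | both, s, t => .and (.edge t s) (.edge s t)
  | inOnly, s, t => .and (.edge t s) (.not (.edge s t))
  | outOnly, s, t => .and (.edge s t) (.not (.edge t s))
  | neither, s, t => .and (.not (.or (.edge t s) (.edge s t))) (.not (.eq t s))

lemma sat_formula {d : ℕ} {V : Type} [Fintype V] (E : V → V → Prop) (lab : V → Fin d → Bool)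
    (k : AdjKind) (s t : C2Var) (a : C2Var → V) :
    C2.sat E lab (k.formula s t) a ↔ k.holds E (a s) (a t) := by
  cases k <;> simp [formula, holds, C2.sat]

end AdjKind

section AdjacencyKind

variable {V W : Type}

open Classical in
noncomputable def adjKind (E : V → V → Prop) (v w : V) : Option AdjKind :=
  if w = v then none
  else if E w v then (if E v w then some .both else some .inOnly)
  else if E v w then some .outOnly else some .neither

lemma adjKind_eq_none_iff {E : V → V → Prop} {v w : V} : adjKind E v w = none ↔ w = v := by
  unfold adjKind; split_ifs <;> simp_all

lemma adjKind_eq_some_iff {E : V → V → Prop} (hE : ∀ x, ¬ E x x) {v w : V} {k : AdjKind} :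
    adjKind E v w = some k ↔ k.holds E v w := by
  unfold adjKind
  split_ifs <;> cases k <;> simp_all [AdjKind.holds]

lemma adjKind_eq_adjKind {EG : V → V → Prop} {EH : W → W → Prop}
    (hG : ∀ x, ¬ EG x x) (hH : ∀ y, ¬ EH y y) {p x : V} {q y : W}
    (h : adjKind EG p x = adjKind EH q y) :
    (x = p ↔ y = q) ∧ (EG x p ↔ EH y q) ∧ (EG p x ↔ EH q y) := by
  unfold adjKind at h
  split_ifs at h <;> simp_all

end AdjacencyKind

section WL

variable {d : ℕ} {V W : Type} [Fintype V] [Fintype W]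
  {EG : V → V → Prop} {labG : V → Fin d → Bool} {EH : W → W → Prop} {labH : W → Fin d → Bool}
  {c ℓ : ℕ}

lemma WL_succ_eq_WL_succ_iff {x : V} {y : W} :
    WL EG labG c (ℓ + 1) x = WL EH labH c (ℓ + 1) y ↔
      WL EG labG c ℓ x = WL EH labH c ℓ y ∧
        ∀ k : AdjKind, trunc c (msetOf (k.holds EG x) (WL EG labG c ℓ)) =
          trunc c (msetOf (k.holds EH y) (WL EH labH c ℓ)) := by
  simp only [WL, WLC, Prod.mk.injEq]
  constructor
  · rintro ⟨h₀, h₁, h₂, h₃, h₄⟩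
    exact ⟨h₀, fun k => by cases k <;> assumption⟩
  · rintro ⟨h₀, h⟩
    exact ⟨h₀, h .both, h .inOnly, h .outOnly, h .neither⟩

lemma WL_eq_of_WL_succ_eq {x : V} {y : W}
    (h : WL EG labG c (ℓ + 1) x = WL EH labH c (ℓ + 1) y) :
    WL EG labG c ℓ x = WL EH labH c ℓ y :=
  (WL_succ_eq_WL_succ_iff.1 h).1

lemma labels_eq_of_WL_eq {x : V} {y : W} (h : WL EG labG c ℓ x = WL EH labH c ℓ y) :
    labG x = labH y := by
  induction ℓ with
  | zero => exact h
  | succ ℓ ih => exact ih (WL_eq_of_WL_succ_eq h)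

theorem min_card_eq_of_WL_succ_eq (hG : ∀ x, ¬ EG x x) (hH : ∀ y, ¬ EH y y) {p : V} {q : W}
    (h : WL EG labG c (ℓ + 1) p = WL EH labH c (ℓ + 1) q) {SG : V → Prop} {SH : W → Prop}
    (hS : ∀ x y, WL EG labG c ℓ x = WL EH labH c ℓ y → adjKind EG p x = adjKind EH q y →
      (SG x ↔ SH y)) :
    min c (Nat.card {x | SG x}) = min c (Nat.card {y | SH y}) := by
  classical
  obtain ⟨h₀, hk⟩ := WL_succ_eq_WL_succ_iff.1 h
  refine min_card_eq_of_min_card_fibres_eq (fun x => (WL EG labG c ℓ x, adjKind EG p x))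
    (fun y => (WL EH labH c ℓ y, adjKind EH q y)) ?_
    fun x y hxy => hS x y (congrArg Prod.fst hxy) (congrArg Prod.snd hxy)
  rintro ⟨g, _ | k⟩
  · simp only [Prod.mk.injEq, adjKind_eq_none_iff]
    exact congrArg (min c) (card_setOf_and_eq_self_eq (by rw [h₀]))
  · have := trunc_eq_trunc_iff.1 (hk k) g
    simp only [Prod.mk.injEq, adjKind_eq_some_iff hG, adjKind_eq_some_iff hH, count_msetOf]
      at this ⊢
    simpa only [and_comm] using this

end WL

def C2Var.other : C2Var → C2Var
  | .x => .y
  | .y => .x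

lemma C2Var.other_ne (s : C2Var) : s.other ≠ s := by
  cases s <;> simp [C2Var.other]

section Soundness

variable {d : ℕ} {V W : Type}
  {EG : V → V → Prop} {labG : V → Fin d → Bool} {EH : W → W → Prop} {labH : W → Fin d → Bool}
  {c : ℕ}

def SameAtomicType (EG : V → V → Prop) (EH : W → W → Prop) (a : C2Var → V) (b : C2Var → W) :
    Prop :=
  ∀ s t, (a s = a t ↔ b s = b t) ∧ (EG (a s) (a t) ↔ EH (b s) (b t))

lemma sameAtomicType_update (hG : ∀ x, ¬ EG x x) (hH : ∀ y, ¬ EH y y) (w : C2Var)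
    {a : C2Var → V} {b : C2Var → W} {x : V} {y : W}
    (h : (x = a w.other ↔ y = b w.other) ∧ (EG x (a w.other) ↔ EH y (b w.other)) ∧
      (EG (a w.other) x ↔ EH (b w.other) y)) :
    SameAtomicType EG EH (Function.update a w x) (Function.update b w y) := by
  obtain ⟨h₁, h₂, h₃⟩ := h
  intro s t
  cases w <;> cases s <;> cases t <;> simp_all [Function.update, C2Var.other, eq_comm]

variable [Fintype V] [Fintype W]

theorem sat_iff_sat_of_WL_eq (hG : ∀ x, ¬ EG x x) (hH : ∀ y, ¬ EH y y) (φ : C2 d) {ℓ : ℕ}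
    {a : C2Var → V} {b : C2Var → W} (hd : φ.depth ≤ ℓ) (hr : φ.rank ≤ c)
    (hcol : ∀ t, WL EG labG c ℓ (a t) = WL EH labH c ℓ (b t))
    (hat : SameAtomicType EG EH a b) :
    C2.sat EG labG φ a ↔ C2.sat EH labH φ b := by
  induction φ generalizing ℓ a b with
  | eq s t => exact (hat s t).1
  | edge s t => exact (hat s t).2
  | pred i s => simp only [C2.sat, labels_eq_of_WL_eq (hcol s)]
  | not φ ih => exact not_congr (ih hd hr hcol hat)
  | and φ ψ ihφ ihψ =>
    simp only [C2.depth, C2.rank, max_le_iff] at hd hr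
    exact and_congr (ihφ hd.1 hr.1 hcol hat) (ihψ hd.2 hr.2 hcol hat)
  | or φ ψ ihφ ihψ =>
    simp only [C2.depth, C2.rank, max_le_iff] at hd hr
    exact or_congr (ihφ hd.1 hr.1 hcol hat) (ihψ hd.2 hr.2 hcol hat)
  | exN k w ψ ih =>
    simp only [C2.depth, C2.rank, max_le_iff] at hd hr
    obtain ⟨ℓ, rfl⟩ : ∃ ℓ', ℓ = ℓ' + 1 := ⟨ℓ - 1, by omega⟩
    have hmin : min c (Nat.card {x | C2.sat EG labG ψ (Function.update a w x)}) =
        min c (Nat.card {y | C2.sat EH labH ψ (Function.update b w y)}) :=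
      min_card_eq_of_WL_succ_eq hG hH (hcol w.other) fun x y hxy hkind =>
        ih (ℓ := ℓ) (by omega) hr.2
          (fun t => by
            rw [Function.update_apply, Function.update_apply]
            split_ifs
            exacts [hxy, WL_eq_of_WL_succ_eq (hcol t)])
          (sameAtomicType_update hG hH w (adjKind_eq_adjKind hG hH hkind))
    simp only [C2.sat]
    omega

end Soundness

namespace C2

variable {d : ℕ}

def conj (φ : C2 d) (l : List (C2 d)) : C2 d := l.foldr .and φ

lemma sat_conj {V : Type} [Fintype V] (E : V → V → Prop) (lab : V → Fin d → Bool) (φ : C2 d)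
    (l : List (C2 d)) (a : C2Var → V) :
    sat E lab (conj φ l) a ↔ sat E lab φ a ∧ ∀ ψ ∈ l, sat E lab ψ a := by
  induction l with
  | nil => simp [conj]
  | cons ψ l ih =>
    simp only [conj, List.foldr_cons, sat, List.forall_mem_cons] at ih ⊢
    rw [ih]
    tauto

/-- Membership in `C²_{ℓ,c}` with free variables among `S`. -/
def Bounded (ℓ c : ℕ) (S : Finset C2Var) (φ : C2 d) : Prop :=
  φ.depth ≤ ℓ ∧ φ.rank ≤ c ∧ φ.freeVars ⊆ S

namespace Bounded

variable {ℓ c : ℕ} {S : Finset C2Var} {φ ψ : C2 d}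

lemma mono {ℓ' : ℕ} {S' : Finset C2Var} (h : φ.Bounded ℓ c S) (hℓ : ℓ ≤ ℓ') (hS : S ⊆ S') :
    φ.Bounded ℓ' c S' :=
  ⟨h.1.trans hℓ, h.2.1, h.2.2.trans hS⟩

lemma not (h : φ.Bounded ℓ c S) : φ.not.Bounded ℓ c S := h

lemma and (hφ : φ.Bounded ℓ c S) (hψ : ψ.Bounded ℓ c S) : (φ.and ψ).Bounded ℓ c S :=
  ⟨max_le hφ.1 hψ.1, max_le hφ.2.1 hψ.2.1, Finset.union_subset hφ.2.2 hψ.2.2⟩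

lemma conj {l : List (C2 d)} (hφ : φ.Bounded ℓ c S) (hl : ∀ ψ ∈ l, ψ.Bounded ℓ c S) :
    (C2.conj φ l).Bounded ℓ c S := by
  induction l with
  | nil => exact hφ
  | cons ψ l ih =>
    rw [List.forall_mem_cons] at hl
    exact hl.1.and (ih hl.2)

lemma exN {k : ℕ} {w : C2Var} (hk : k ≤ c) (h : φ.Bounded ℓ c (insert w S)) :
    (C2.exN k w φ).Bounded (ℓ + 1) c S :=
  ⟨Nat.succ_le_succ h.1, max_le hk h.2.1, Finset.subset_insert_iff.1 h.2.2⟩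

end Bounded

/-- For `m = c` the upper bound `¬ ∃_{m+1}` is dropped: it is not needed and would exceed the
counting rank `c`. -/
def minCountEq (c m : ℕ) (w : C2Var) (φ : C2 d) : C2 d :=
  if m < c then .and (.exN m w φ) (.not (.exN (m + 1) w φ)) else .exN m w φ

lemma sat_minCountEq {V : Type} [Fintype V] (E : V → V → Prop) (lab : V → Fin d → Bool)
    {c m : ℕ} (hm : m ≤ c) (w : C2Var) (φ : C2 d) (a : C2Var → V) :
    sat E lab (minCountEq c m w φ) a ↔
      min c (Nat.card {x | sat E lab φ (Function.update a w x)}) = m := by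
  unfold minCountEq
  split_ifs <;> simp only [sat] <;> omega

lemma Bounded.minCountEq {ℓ c m : ℕ} {S : Finset C2Var} {w : C2Var} {φ : C2 d} (hm : m ≤ c)
    (h : φ.Bounded ℓ c (insert w S)) : (C2.minCountEq c m w φ).Bounded (ℓ + 1) c S := by
  unfold C2.minCountEq
  split_ifs with hmc
  · exact (h.exN hm).and (h.exN hmc).not
  · exact h.exN hm

end C2

lemma AdjKind.bounded_formula {d c : ℕ} (k : AdjKind) (s t : C2Var) :
    (k.formula s t : C2 d).Bounded 0 c {s, t} := by
  cases k <;> refine ⟨Nat.zero_le _, Nat.zero_le _, ?_⟩ <;>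
    simp [AdjKind.formula, C2.freeVars, Finset.subset_iff]

section CharacteristicFormula

variable {d : ℕ} {V W : Type} [Fintype V] [Fintype W]

/-- For round `ℓ + 1` the conjuncts fix, per adjacency kind, the truncated number of neighbours of
each colour occurring in `G` and exclude all other colours; as `G` is finite, finitely many
conjuncts suffice. -/
noncomputable def charFormula (EG : V → V → Prop) (labG : V → Fin d → Bool) (c : ℕ) :
    ℕ → V → C2Var → C2 d
  | 0, u, s => C2.conj (.eq s s) ((List.finRange d).map fun i =>
      if labG u i then .pred i s else .not (.pred i s))
  | ℓ + 1, u, s => C2.conj (charFormula EG labG c ℓ u s)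
      ((Finset.univ : Finset AdjKind).toList.flatMap fun k =>
        C2.minCountEq c 0 s.other (C2.conj (k.formula s s.other)
          ((Finset.univ : Finset V).toList.map fun w =>
            .not (charFormula EG labG c ℓ w s.other))) ::
        (Finset.univ : Finset V).toList.map fun w =>
          C2.minCountEq c
            (min c (Nat.card {x | k.holds EG u x ∧ WL EG labG c ℓ x = WL EG labG c ℓ w}))
            s.other (.and (k.formula s s.other) (charFormula EG labG c ℓ w s.other)))

variable (EG : V → V → Prop) (labG : V → Fin d → Bool) (c : ℕ)

theorem charFormula_bounded (ℓ : ℕ) (u : V) (s : C2Var) :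
    (charFormula EG labG c ℓ u s).Bounded ℓ c {s} := by
  induction ℓ generalizing u s with
  | zero =>
    refine C2.Bounded.conj ⟨Nat.zero_le _, Nat.zero_le _, by simp [C2.freeVars]⟩ ?_
    simp only [List.forall_mem_map]
    intro i _
    split_ifs <;> exact ⟨Nat.zero_le _, Nat.zero_le _, subset_rfl⟩
  | succ ℓ ih =>
    have hsub : ({s, s.other} : Finset C2Var) ⊆ insert s.other {s} := by
      simp [Finset.subset_iff]
    refine C2.Bounded.conj ((ih u s).mono (Nat.le_succ ℓ) subset_rfl) ?_
    simp only [List.forall_mem_flatMap, List.forall_mem_cons, List.forall_mem_map]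
    refine fun k _ => ⟨C2.Bounded.minCountEq (Nat.zero_le c) ?_,
      fun w _ => C2.Bounded.minCountEq (min_le_left _ _) ?_⟩
    · refine C2.Bounded.conj ((k.bounded_formula s s.other).mono (Nat.zero_le ℓ) hsub) ?_
      simp only [List.forall_mem_map]
      exact fun w _ => ((ih w s.other).mono le_rfl (by simp)).not
    · exact ((k.bounded_formula s s.other).mono (Nat.zero_le ℓ) hsub).and
        ((ih w s.other).mono le_rfl (by simp))

theorem sat_charFormula_iff (EH : W → W → Prop) (labH : W → Fin d → Bool) (ℓ : ℕ) (u : V)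
    (s : C2Var) (b : C2Var → W) :
    C2.sat EH labH (charFormula EG labG c ℓ u s) b ↔ WL EH labH c ℓ (b s) = WL EG labG c ℓ u := by
  induction ℓ generalizing u s b with
  | zero =>
    simp only [charFormula, C2.sat_conj, List.forall_mem_map, List.mem_finRange, forall_const,
      WL]
    refine ⟨fun h => funext fun i => ?_, fun h => ⟨rfl, fun i => ?_⟩⟩
    · have := h.2 i
      split_ifs at this <;> simp_all [C2.sat]
    · split_ifs <;> simp_all [C2.sat]
  | succ ℓ ih =>
    rw [WL_succ_eq_WL_succ_iff]
    simp only [charFormula, C2.sat_conj, ih, List.forall_mem_flatMap, List.forall_mem_cons,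
      List.forall_mem_map, Finset.mem_toList, Finset.mem_univ, forall_const,
      C2.sat_minCountEq _ _ (Nat.zero_le c), C2.sat_minCountEq _ _ (min_le_left c _), C2.sat,
      AdjKind.sat_formula, Function.update_self, Function.update_of_ne (C2Var.other_ne s).symm,
      trunc_msetOf_eq_trunc_msetOf_iff]

end CharacteristicFormula

/-- two nodes `u` (in `G`) and `v` (in `H`) satisfy the same `C²_{ℓ,c}`
formulas with one free variable `x` iff their `c`-bounded WL colours after `ℓ` rounds
coincide. -/
theorem stmt5 (ℓ c d : ℕ) {V W : Type} [Fintype V] [Fintype W]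
    (EG : V → V → Prop) (labG : V → Fin d → Bool) (hG : ∀ v, ¬ EG v v)
    (EH : W → W → Prop) (labH : W → Fin d → Bool) (hH : ∀ w, ¬ EH w w)
    (u : V) (v : W) :
    (∀ φ : C2 d, φ.depth ≤ ℓ → φ.rank ≤ c → φ.freeVars ⊆ {C2Var.x} →
        (C2.sat EG labG φ (fun _ => u) ↔ C2.sat EH labH φ (fun _ => v))) ↔
      WL EG labG c ℓ u = WL EH labH c ℓ v := by
  constructor
  · intro h
    obtain ⟨hd, hr, hfv⟩ := charFormula_bounded EG labG c ℓ u .x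
    have hu := (sat_charFormula_iff EG labG c EG labG ℓ u .x fun _ => u).2 rfl
    exact ((sat_charFormula_iff EG labG c EH labH ℓ u .x fun _ => v).1
      ((h _ hd hr hfv).1 hu)).symm
  · intro h φ hd hr _
    exact sat_iff_sat_of_WL_eq hG hH φ hd hr (fun _ => h)
      fun _ _ => ⟨by simp, iff_of_false (hG u) (hH v)⟩
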